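/- Let f be a ϑ-self-concordant barrier on an open convex domain D_f ⊆ R_{>0}^n, and set K = 4ϑ + 1. Suppose x ∈ D_f is such that for all i ∈ [n], both x + (K+1)x_i e_i ∈ D_f and x − (1/2)x_i e_i ∈ D_f. Then H(x) ≼ 4nK^2 Diag(1/x_1^2, …, 1/x_n^2). -/

import Mathlib

/-- Local quadratic form `v ↦ vᵀ H v` induced by a Hessian matrix `H`. -/
noncomputable def quadForm {n : ℕ} (H : Matrix (Fin n) (Fin n) ℝ) (v : Fin n → ℝ) : ℝ :=
  dotProduct v (H.mulVec v)

/-!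
Renegar's bound: if `y ∈ D` and `⟨g x, y - x⟩ ≥ 0`, then `‖y - x‖_x ≤ K`. It follows from the
barrier inequality `⟨g z, y - z⟩ ≤ ϑ`, a Riccati comparison for `t ↦ ⟨g (z + t (y - z)), y - z⟩`,
together with the growth of `⟨g, y - x⟩` along the segment that self-concordance forces while
`‖y - x‖_x > 1`.

Of the two points `x + (K + 1) xᵢ eᵢ` and `x - xᵢ eᵢ / 2`, one lies in the half-space
`⟨g x, · - x⟩ ≥ 0`, so Renegar's bound gives `‖xᵢ eᵢ / 2‖_x ≤ K`, i.e. `Hᵢᵢ(x) ≤ 4 K² / xᵢ²`.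
Cauchy–Schwarz for the form `H(x)` gives `zᵀ H(x) z ≤ n ∑ zᵢ² Hᵢᵢ(x)`, which turns the diagonal
bound into the claim.
-/

namespace Matrix

variable {n : ℕ} {M : Matrix (Fin n) (Fin n) ℝ}

lemma PosSemidef.quadForm_nonneg (hM : M.PosSemidef) (v : Fin n → ℝ) : 0 ≤ quadForm M v :=
  hM.dotProduct_mulVec_nonneg v

lemma PosDef.quadForm_pos (hM : M.PosDef) {v : Fin n → ℝ} (hv : v ≠ 0) : 0 < quadForm M v :=
  hM.dotProduct_mulVec_pos hv

lemma quadForm_smul (M : Matrix (Fin n) (Fin n) ℝ) (c : ℝ) (v : Fin n → ℝ) :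
    quadForm M (c • v) = c ^ 2 * quadForm M v := by
  simp only [quadForm, mulVec_smul, dotProduct_smul, smul_dotProduct, smul_eq_mul]
  ring

lemma quadForm_single (M : Matrix (Fin n) (Fin n) ℝ) (i : Fin n) (c : ℝ) :
    quadForm M (Pi.single i c) = c ^ 2 * M i i := by
  simp only [quadForm, mulVec_single, single_dotProduct, Pi.smul_apply, col_apply,
    MulOpposite.smul_eq_mul_unop, MulOpposite.unop_op]
  ring

lemma IsHermitian.dotProduct_mulVec_comm (hM : M.IsHermitian) (u w : Fin n → ℝ) :
    u ⬝ᵥ (M *ᵥ w) = w ⬝ᵥ (M *ᵥ u) := by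
  rw [dotProduct_mulVec, ← mulVec_transpose, ← conjTranspose_eq_transpose_of_trivial, hM,
    dotProduct_comm]

lemma quadForm_add (hM : M.IsHermitian) (u w : Fin n → ℝ) :
    quadForm M (u + w) = quadForm M u + 2 * (u ⬝ᵥ (M *ᵥ w)) + quadForm M w := by
  simp only [quadForm, mulVec_add, dotProduct_add, add_dotProduct,
    hM.dotProduct_mulVec_comm w u]
  ring

lemma PosSemidef.sq_dotProduct_mulVec_le (hM : M.PosSemidef) (u w : Fin n → ℝ) :
    (u ⬝ᵥ (M *ᵥ w)) ^ 2 ≤ quadForm M u * quadForm M w := by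
  have hdisc : ∀ t : ℝ, 0 ≤ quadForm M u * (t * t) + 2 * (u ⬝ᵥ (M *ᵥ w)) * t + quadForm M w := by
    intro t
    have := hM.quadForm_nonneg (t • u + w)
    rw [quadForm_add hM.isHermitian, quadForm_smul, smul_dotProduct, smul_eq_mul] at this
    linarith
  have := discrim_le_zero hdisc
  rw [discrim] at this
  linarith

lemma PosSemidef.quadForm_sum_le {ι : Type*} (hM : M.PosSemidef) (s : Finset ι)
    (w : ι → Fin n → ℝ) :
    quadForm M (∑ i ∈ s, w i) ≤ s.card * ∑ i ∈ s, quadForm M (w i) := by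
  have hentry : ∀ i j, w i ⬝ᵥ (M *ᵥ w j) ≤ √(quadForm M (w i)) * √(quadForm M (w j)) := by
    intro i j
    rw [← Real.sqrt_mul (hM.quadForm_nonneg _)]
    exact Real.le_sqrt_of_sq_le (hM.sq_dotProduct_mulVec_le _ _)
  calc quadForm M (∑ i ∈ s, w i) = ∑ i ∈ s, ∑ j ∈ s, w i ⬝ᵥ (M *ᵥ w j) := by
        simp only [quadForm, mulVec_sum, dotProduct_sum, sum_dotProduct]
        exact Finset.sum_comm
    _ ≤ ∑ i ∈ s, ∑ j ∈ s, √(quadForm M (w i)) * √(quadForm M (w j)) := by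
        gcongr with i _ j _
        exact hentry i j
    _ = (∑ i ∈ s, √(quadForm M (w i))) ^ 2 := by rw [sq, Finset.sum_mul_sum]
    _ ≤ s.card * ∑ i ∈ s, √(quadForm M (w i)) ^ 2 := sq_sum_le_card_mul_sum_sq
    _ = s.card * ∑ i ∈ s, quadForm M (w i) := by
        simp only [Real.sq_sqrt (hM.quadForm_nonneg _)]

lemma PosDef.sq_dotProduct_le (hM : M.PosDef) (g w : Fin n → ℝ) :
    (g ⬝ᵥ w) ^ 2 ≤ quadForm M (M⁻¹ *ᵥ g) * quadForm M w := by
  have hg : M *ᵥ (M⁻¹ *ᵥ g) = g := by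
    rw [mulVec_mulVec, mul_nonsing_inv _ hM.det_pos.ne'.isUnit, one_mulVec]
  calc (g ⬝ᵥ w) ^ 2 = ((M⁻¹ *ᵥ g) ⬝ᵥ (M *ᵥ w)) ^ 2 := by
        rw [hM.isHermitian.dotProduct_mulVec_comm, hg, dotProduct_comm]
    _ ≤ _ := hM.posSemidef.sq_dotProduct_mulVec_le _ _

end Matrix

open Matrix Set

lemma sub_le_sub_of_hasDerivAt_le {f g f' g' : ℝ → ℝ} {a b : ℝ} (hab : a ≤ b)
    (hf : ∀ t ∈ Icc a b, HasDerivAt f (f' t) t) (hg : ∀ t ∈ Icc a b, HasDerivAt g (g' t) t)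
    (hle : ∀ t ∈ Icc a b, g' t ≤ f' t) : g b - g a ≤ f b - f a := by
  have hderiv : ∀ t ∈ Icc a b, HasDerivAt (fun s => f s - g s) (f' t - g' t) t :=
    fun t ht => (hf t ht).sub (hg t ht)
  have hmono : MonotoneOn (fun s => f s - g s) (Icc a b) := by
    refine monotoneOn_of_hasDerivWithinAt_nonneg (convex_Icc a b)
      (fun t ht => (hderiv t ht).continuousAt.continuousWithinAt)
      (fun t ht => (hderiv t (interior_subset ht)).hasDerivWithinAt)
      (fun t ht => sub_nonneg.2 (hle t (interior_subset ht)))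
  have := hmono (left_mem_Icc.2 hab) (right_mem_Icc.2 hab) hab
  simp only at this
  linarith

/-- A solution of `θ ψ' ≥ ψ²` on `[0, 1]` starts at most at `θ`: otherwise `-1/ψ` grows at rate
at least `1/θ` and would reach `0` before time `θ / ψ 0 < 1`. -/
lemma le_of_sq_le_mul_hasDerivAt {ψ q : ℝ → ℝ} {θ : ℝ} (hθ : 0 ≤ θ)
    (hψ : ∀ t ∈ Icc (0 : ℝ) 1, HasDerivAt ψ (q t) t)
    (hq : ∀ t ∈ Icc (0 : ℝ) 1, ψ t ^ 2 ≤ θ * q t) : ψ 0 ≤ θ := by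
  by_contra! hψ0
  obtain rfl | hθ := hθ.eq_or_lt
  · nlinarith [hq 0 (left_mem_Icc.2 zero_le_one)]
  have hq0 : ∀ t ∈ Icc (0 : ℝ) 1, 0 ≤ q t := fun t ht =>
    nonneg_of_mul_nonneg_right ((sq_nonneg _).trans (hq t ht)) hθ
  have hψ_pos : ∀ t ∈ Icc (0 : ℝ) 1, 0 < ψ t := by
    intro t ht
    have := sub_le_sub_of_hasDerivAt_le ht.1
      (fun s hs => hψ s ⟨hs.1, hs.2.trans ht.2⟩) (fun s _ => hasDerivAt_const s (0 : ℝ))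
      (fun s hs => hq0 s ⟨hs.1, hs.2.trans ht.2⟩)
    linarith
  set t₀ := θ / ψ 0
  have ht₀ : t₀ ∈ Icc (0 : ℝ) 1 :=
    ⟨div_nonneg hθ.le (by linarith), (div_le_one (by linarith)).2 hψ0.le⟩
  have hsub : Icc 0 t₀ ⊆ Icc (0 : ℝ) 1 := Icc_subset_Icc le_rfl ht₀.2
  have hcmp := sub_le_sub_of_hasDerivAt_le (f := fun s => -(ψ s)⁻¹) (g := fun s => s / θ)
    (f' := fun t => q t / ψ t ^ 2) (g' := fun _ => 1 / θ) ht₀.1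
    (fun t ht => ((hψ t (hsub ht)).inv (hψ_pos t (hsub ht)).ne').neg.congr_deriv (by ring))
    (fun t _ => by simpa using (hasDerivAt_id t).div_const θ)
    (fun t ht => by
      rw [div_le_div_iff₀ hθ (pow_pos (hψ_pos t (hsub ht)) 2)]
      linarith [hq t (hsub ht)])
  have ht₀θ : t₀ / θ = (ψ 0)⁻¹ := by
    simp only [t₀]; field_simp
  simp only [zero_div, sub_zero, ht₀θ] at hcmp
  linarith [inv_pos.2 (hψ_pos t₀ ht₀)]

section Barrier

variable {n : ℕ} {D : Set (Fin n → ℝ)} {g : (Fin n → ℝ) → Fin n → ℝ}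
  {H : (Fin n → ℝ) → Matrix (Fin n) (Fin n) ℝ} {θ : ℝ} {x y v : Fin n → ℝ}

def HasHessianOn (D : Set (Fin n → ℝ)) (g : (Fin n → ℝ) → Fin n → ℝ)
    (H : (Fin n → ℝ) → Matrix (Fin n) (Fin n) ℝ) : Prop :=
  ∀ x ∈ D, ∀ v w : Fin n → ℝ, fderiv ℝ (fun y => g y ⬝ᵥ v) x w = v ⬝ᵥ (H x *ᵥ w)

/-- Differentiability is not assumed: where `y ↦ g y ⬝ᵥ v` is not differentiable its `fderiv`
vanishes, which `v ⬝ᵥ H v > 0` rules out. -/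
lemma HasHessianOn.hasDerivAt_dotProduct_line (hH : HasHessianOn D g H)
    (hpd : ∀ x ∈ D, (H x).PosDef) {t : ℝ} (ht : x + t • v ∈ D) :
    HasDerivAt (fun s : ℝ => g (x + s • v) ⬝ᵥ v) (quadForm (H (x + t • v)) v) t := by
  obtain rfl | hv := eq_or_ne v 0
  · simpa [quadForm] using hasDerivAt_const t (0 : ℝ)
  have hdiff : DifferentiableAt ℝ (fun y => g y ⬝ᵥ v) (x + t • v) := by
    by_contra hnd
    have h := hH _ ht v v
    rw [fderiv_zero_of_not_differentiableAt hnd, _root_.zero_apply] at h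
    exact ((hpd _ ht).quadForm_pos hv).ne h
  have hline : HasDerivAt (fun s : ℝ => x + s • v) v t := by
    simpa using ((hasDerivAt_id t).smul_const v).const_add x
  have hcomp := hdiff.hasFDerivAt.comp_hasDerivAt t hline
  rwa [hH _ ht v v] at hcomp

lemma HasHessianOn.dotProduct_sub_le (hH : HasHessianOn D g H) (hconv : Convex ℝ D)
    (hpd : ∀ x ∈ D, (H x).PosDef)
    (hθ : ∀ x ∈ D, quadForm (H x) ((H x)⁻¹ *ᵥ g x) ≤ θ) (hx : x ∈ D) (hy : y ∈ D) :
    g x ⬝ᵥ (y - x) ≤ θ := by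
  have hseg : ∀ t ∈ Icc (0 : ℝ) 1, x + t • (y - x) ∈ D := fun t ht =>
    hconv.add_smul_sub_mem hx hy ht
  simpa using le_of_sq_le_mul_hasDerivAt
    ((hpd x hx).posSemidef.quadForm_nonneg _ |>.trans (hθ x hx))
    (fun t ht => hH.hasDerivAt_dotProduct_line hpd (hseg t ht))
    (fun t ht => ((hpd _ (hseg t ht)).sq_dotProduct_le _ _).trans
      (mul_le_mul_of_nonneg_right (hθ _ (hseg t ht))
        ((hpd _ (hseg t ht)).posSemidef.quadForm_nonneg _)))

lemma sq_one_sub_sqrt_mul_quadForm_le (hpd : ∀ x ∈ D, (H x).PosDef)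
    (hsc2 : ∀ x ∈ D, ∀ y : Fin n → ℝ, quadForm (H x) (y - x) < 1 →
      ∀ v : Fin n → ℝ, v ≠ 0 →
        1 - Real.sqrt (quadForm (H x) (y - x)) ≤
            Real.sqrt (quadForm (H y) v) / Real.sqrt (quadForm (H x) v) ∧
        Real.sqrt (quadForm (H y) v) / Real.sqrt (quadForm (H x) v) ≤
            1 / (1 - Real.sqrt (quadForm (H x) (y - x))))
    (hx : x ∈ D) (hy : y ∈ D) (hxy : quadForm (H x) (y - x) < 1) (v : Fin n → ℝ) :
    (1 - √(quadForm (H x) (y - x))) ^ 2 * quadForm (H x) v ≤ quadForm (H y) v := by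
  obtain rfl | hv := eq_or_ne v 0
  · simp [quadForm]
  have hlow := (hsc2 x hx y hxy v hv).1
  rw [le_div_iff₀ (Real.sqrt_pos.2 ((hpd x hx).quadForm_pos hv))] at hlow
  have hs : √(quadForm (H x) (y - x)) ≤ 1 := Real.sqrt_le_one.2 hxy.le
  calc (1 - √(quadForm (H x) (y - x))) ^ 2 * quadForm (H x) v
      = ((1 - √(quadForm (H x) (y - x))) * √(quadForm (H x) v)) ^ 2 := by
        rw [mul_pow, Real.sq_sqrt ((hpd x hx).posSemidef.quadForm_nonneg v)]
    _ ≤ √(quadForm (H y) v) ^ 2 :=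
        pow_le_pow_left₀ (mul_nonneg (sub_nonneg.2 hs) (Real.sqrt_nonneg _)) hlow 2
    _ = quadForm (H y) v := Real.sq_sqrt ((hpd y hy).posSemidef.quadForm_nonneg v)

/-- Along `x + t v` with `‖v‖_x = r ≥ 1`, the Hessian stays above `(1 - t r)² r²` up to
`t = 1 / (2 r)`; integrating gives a gain of `∫₀^{1/(2r)} (1 - t r)² r² dt = 7 r / 24`. -/
lemma HasHessianOn.dotProduct_add_le_dotProduct_line (hH : HasHessianOn D g H)
    (hpd : ∀ x ∈ D, (H x).PosDef)
    (hsc1 : ∀ x ∈ D, ∀ y : Fin n → ℝ, quadForm (H x) (y - x) < 1 → y ∈ D)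
    (hstab : ∀ x ∈ D, ∀ y ∈ D, quadForm (H x) (y - x) < 1 → ∀ v : Fin n → ℝ,
      (1 - √(quadForm (H x) (y - x))) ^ 2 * quadForm (H x) v ≤ quadForm (H y) v)
    (hx : x ∈ D) (hv : 1 ≤ quadForm (H x) v) :
    g x ⬝ᵥ v + 7 * √(quadForm (H x) v) / 24 ≤
      g (x + (2 * √(quadForm (H x) v))⁻¹ • v) ⬝ᵥ v := by
  set r := √(quadForm (H x) v)
  have hr : 1 ≤ r := Real.one_le_sqrt.2 hv
  have hr2 : r ^ 2 = quadForm (H x) v := Real.sq_sqrt (by linarith)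
  set t₁ := (2 * r)⁻¹
  have ht₁r : t₁ * r = 1 / 2 := by simp only [t₁]; field_simp
  have hdist : ∀ t ∈ Icc 0 t₁, quadForm (H x) (x + t • v - x) = (t * r) ^ 2 := by
    intro t _
    rw [add_sub_cancel_left, quadForm_smul, ← hr2, mul_pow]
  have htr : ∀ t ∈ Icc 0 t₁, 0 ≤ t * r ∧ t * r ≤ 1 / 2 := fun t ht =>
    ⟨by nlinarith [ht.1], ht₁r ▸ mul_le_mul_of_nonneg_right ht.2 (by linarith)⟩
  have hball : ∀ t ∈ Icc 0 t₁, quadForm (H x) (x + t • v - x) < 1 := by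
    intro t ht
    rw [hdist t ht]
    nlinarith [htr t ht]
  have hmem : ∀ t ∈ Icc 0 t₁, x + t • v ∈ D := fun t ht => hsc1 x hx _ (hball t ht)
  have hlow : ∀ t ∈ Icc 0 t₁, (1 - t * r) ^ 2 * r ^ 2 ≤ quadForm (H (x + t • v)) v := by
    intro t ht
    have h := hstab x hx _ (hmem t ht) (hball t ht) v
    rwa [hdist t ht, Real.sqrt_sq (htr t ht).1, ← hr2] at h
  have hχ : ∀ t : ℝ,
      HasDerivAt (fun s => -(r / 3) * (1 - s * r) ^ 3) ((1 - t * r) ^ 2 * r ^ 2) t := by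
    intro t
    have := ((((hasDerivAt_id t).mul_const r).const_sub 1).pow 3).const_mul (-(r / 3))
    exact this.congr_deriv (by simp; ring)
  have hcmp := sub_le_sub_of_hasDerivAt_le (by positivity)
    (fun t ht => hH.hasDerivAt_dotProduct_line hpd (hmem t ht)) (fun t _ => hχ t) hlow
  simp only [ht₁r, zero_smul, add_zero, zero_mul] at hcmp
  linarith

lemma HasHessianOn.quadForm_sub_le_of_dotProduct_nonneg (hH : HasHessianOn D g H)
    (hconv : Convex ℝ D) (hpd : ∀ x ∈ D, (H x).PosDef)
    (hsc1 : ∀ x ∈ D, ∀ y : Fin n → ℝ, quadForm (H x) (y - x) < 1 → y ∈ D)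
    (hstab : ∀ x ∈ D, ∀ y ∈ D, quadForm (H x) (y - x) < 1 → ∀ v : Fin n → ℝ,
      (1 - √(quadForm (H x) (y - x))) ^ 2 * quadForm (H x) v ≤ quadForm (H y) v)
    (hθ : ∀ x ∈ D, quadForm (H x) ((H x)⁻¹ *ᵥ g x) ≤ θ) (hx : x ∈ D) (hy : y ∈ D)
    (hgxy : 0 ≤ g x ⬝ᵥ (y - x)) :
    quadForm (H x) (y - x) ≤ (4 * θ + 1) ^ 2 := by
  have hθ0 : 0 ≤ θ := ((hpd x hx).posSemidef.quadForm_nonneg _).trans (hθ x hx)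
  by_cases hQ : quadForm (H x) (y - x) ≤ 1
  · nlinarith
  set r := √(quadForm (H x) (y - x))
  have hr : 1 ≤ r := Real.one_le_sqrt.2 (by linarith)
  have hr2 : r ^ 2 = quadForm (H x) (y - x) := Real.sq_sqrt (by linarith)
  set z := x + (2 * r)⁻¹ • (y - x)
  have hz : z ∈ D := by
    refine hsc1 x hx z ?_
    rw [add_sub_cancel_left, quadForm_smul, ← hr2, inv_pow, mul_pow]
    field_simp
    norm_num
  have hgain := hH.dotProduct_add_le_dotProduct_line hpd hsc1 hstab hx (by linarith)
  have hbarrier := hH.dotProduct_sub_le hconv hpd hθ hz hy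
  have hyz : y - z = (1 - (2 * r)⁻¹) • (y - x) := by
    simp only [z, sub_smul, one_smul]; abel
  rw [hyz, dotProduct_smul, smul_eq_mul] at hbarrier
  have h1 : (1 - (2 * r)⁻¹) * (7 * r / 24) ≤ θ := by
    refine le_trans ?_ hbarrier
    gcongr
    · exact sub_nonneg.2 (inv_le_one_of_one_le₀ (by linarith))
    · linarith
  have h2 : (1 - (2 * r)⁻¹) * (7 * r / 24) = 7 * r / 24 - 7 / 48 := by
    field_simp; ring
  nlinarith

/-- Of two points of `D` on opposite sides of `x` along `u`, one lies in the half-space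
`⟨g x, · - x⟩ ≥ 0`, where Renegar's bound applies. -/
lemma HasHessianOn.min_sq_mul_quadForm_le (hH : HasHessianOn D g H)
    (hconv : Convex ℝ D) (hpd : ∀ x ∈ D, (H x).PosDef)
    (hsc1 : ∀ x ∈ D, ∀ y : Fin n → ℝ, quadForm (H x) (y - x) < 1 → y ∈ D)
    (hstab : ∀ x ∈ D, ∀ y ∈ D, quadForm (H x) (y - x) < 1 → ∀ v : Fin n → ℝ,
      (1 - √(quadForm (H x) (y - x))) ^ 2 * quadForm (H x) v ≤ quadForm (H y) v)
    (hθ : ∀ x ∈ D, quadForm (H x) ((H x)⁻¹ *ᵥ g x) ≤ θ) (hx : x ∈ D)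
    {u : Fin n → ℝ} {s t : ℝ} (hs : 0 ≤ s) (ht : 0 ≤ t) (hxs : x + s • u ∈ D)
    (hxt : x - t • u ∈ D) :
    min s t ^ 2 * quadForm (H x) u ≤ (4 * θ + 1) ^ 2 := by
  have hQ := (hpd x hx).posSemidef.quadForm_nonneg u
  rcases le_total 0 (g x ⬝ᵥ u) with hgu | hgu
  · have h := hH.quadForm_sub_le_of_dotProduct_nonneg hconv hpd hsc1 hstab hθ hx hxs
      (by rw [add_sub_cancel_left, dotProduct_smul, smul_eq_mul]; positivity)
    rw [add_sub_cancel_left, quadForm_smul] at h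
    exact le_trans (by gcongr; exact min_le_left s t) h
  · have hyx : x - t • u - x = (-t) • u := by rw [sub_sub_cancel_left, neg_smul]
    have h := hH.quadForm_sub_le_of_dotProduct_nonneg hconv hpd hsc1 hstab hθ hx hxt
      (by rw [hyx, dotProduct_smul, smul_eq_mul]; nlinarith)
    rw [hyx, quadForm_smul, neg_sq] at h
    exact le_trans (by gcongr; exact min_le_right s t) h

end Barrier

theorem stmt3_general (n : ℕ) (D : Set (Fin n → ℝ))
    (g : (Fin n → ℝ) → (Fin n → ℝ))
    (H : (Fin n → ℝ) → Matrix (Fin n) (Fin n) ℝ)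
    (θ : ℝ)
    (hconv : Convex ℝ D)
    (hDpos : ∀ x ∈ D, ∀ i, 0 < x i)
    (hHess : ∀ x ∈ D, ∀ v w : Fin n → ℝ,
      fderiv ℝ (fun y => dotProduct (g y) v) x w = dotProduct v ((H x).mulVec w))
    (hposdef : ∀ x ∈ D, (H x).PosDef)
    (hsc1 : ∀ x ∈ D, ∀ y : Fin n → ℝ, quadForm (H x) (y - x) < 1 → y ∈ D)
    (hsc2 : ∀ x ∈ D, ∀ y : Fin n → ℝ, quadForm (H x) (y - x) < 1 →
      ∀ v : Fin n → ℝ, v ≠ 0 →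
        1 - Real.sqrt (quadForm (H x) (y - x)) ≤
            Real.sqrt (quadForm (H y) v) / Real.sqrt (quadForm (H x) v) ∧
        Real.sqrt (quadForm (H y) v) / Real.sqrt (quadForm (H x) v) ≤
            1 / (1 - Real.sqrt (quadForm (H x) (y - x))))
    (hθ : ∀ x ∈ D, quadForm (H x) ((H x)⁻¹.mulVec (g x)) ≤ θ)
    (K : ℝ) (hK : K = 4 * θ + 1)
    (x : Fin n → ℝ) (hx : x ∈ D)
    (hx1 : ∀ i : Fin n, x + ((K + 1) * x i) • (Pi.single i 1 : Fin n → ℝ) ∈ D)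
    (hx2 : ∀ i : Fin n, x - ((1 / 2) * x i) • (Pi.single i 1 : Fin n → ℝ) ∈ D) :
    ∀ z : Fin n → ℝ,
      quadForm (H x) z ≤ 4 * (n : ℝ) * K ^ 2 * ∑ i, (z i / x i) ^ 2 := by
  have hK1 : 1 ≤ K := by
    linarith [((hposdef x hx).posSemidef.quadForm_nonneg _).trans (hθ x hx)]
  have hdiag : ∀ i, H x i i ≤ 4 * K ^ 2 / x i ^ 2 := by
    intro i
    have hxi := hDpos x hx i
    have h := HasHessianOn.min_sq_mul_quadForm_le hHess hconv hposdef hsc1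
      (fun x hx y hy hxy v => sq_one_sub_sqrt_mul_quadForm_le hposdef hsc2 hx hy hxy v)
      hθ hx (mul_nonneg (by linarith) hxi.le) (by positivity) (hx1 i) (hx2 i)
    rw [min_eq_right (by nlinarith), quadForm_single, one_pow, one_mul, ← hK] at h
    rw [le_div_iff₀ (by positivity)]
    nlinarith
  intro z
  calc quadForm (H x) z = quadForm (H x) (∑ i, Pi.single i (z i)) := by
        rw [Finset.univ_sum_single]
    _ ≤ n * ∑ i, quadForm (H x) (Pi.single i (z i)) := by
        simpa using (hposdef x hx).posSemidef.quadForm_sum_le Finset.univ fun i => Pi.single i (z i)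
    _ ≤ n * ∑ i, 4 * K ^ 2 * (z i / x i) ^ 2 := by
        gcongr with i
        calc quadForm (H x) (Pi.single i (z i)) = z i ^ 2 * H x i i := quadForm_single _ _ _
          _ ≤ z i ^ 2 * (4 * K ^ 2 / x i ^ 2) := by gcongr; exact hdiag i
          _ = 4 * K ^ 2 * (z i / x i) ^ 2 := by ring
    _ = 4 * n * K ^ 2 * ∑ i, (z i / x i) ^ 2 := by rw [← Finset.mul_sum]; ring

/-- Hessian upper bound `H(x) ≼ 4nK² Diag(1/x²)` with `K = 4ϑ+1`, for a
ϑ-self-concordant barrier whose domain lies in the positive orthant, at a point `x` that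
is well inside the domain. -/
theorem stmt3 (n : ℕ) (D : Set (Fin n → ℝ)) (f : (Fin n → ℝ) → ℝ)
    (g : (Fin n → ℝ) → (Fin n → ℝ))
    (H : (Fin n → ℝ) → Matrix (Fin n) (Fin n) ℝ)
    (θ : ℝ)
    (hopen : IsOpen D) (hconv : Convex ℝ D)
    (hDpos : ∀ x ∈ D, ∀ i, 0 < x i)
    (hf : ContDiffOn ℝ 2 f D)
    (hgrad : ∀ x ∈ D, ∀ v : Fin n → ℝ, fderiv ℝ f x v = dotProduct (g x) v)
    (hHess : ∀ x ∈ D, ∀ v w : Fin n → ℝ,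
      fderiv ℝ (fun y => dotProduct (g y) v) x w = dotProduct v ((H x).mulVec w))
    (hposdef : ∀ x ∈ D, (H x).PosDef)
    (hsc1 : ∀ x ∈ D, ∀ y : Fin n → ℝ, quadForm (H x) (y - x) < 1 → y ∈ D)
    (hsc2 : ∀ x ∈ D, ∀ y : Fin n → ℝ, quadForm (H x) (y - x) < 1 →
      ∀ v : Fin n → ℝ, v ≠ 0 →
        1 - Real.sqrt (quadForm (H x) (y - x)) ≤
            Real.sqrt (quadForm (H y) v) / Real.sqrt (quadForm (H x) v) ∧
        Real.sqrt (quadForm (H y) v) / Real.sqrt (quadForm (H x) v) ≤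
            1 / (1 - Real.sqrt (quadForm (H x) (y - x))))
    (hθ : ∀ x ∈ D, quadForm (H x) ((H x)⁻¹.mulVec (g x)) ≤ θ)
    (K : ℝ) (hK : K = 4 * θ + 1)
    (x : Fin n → ℝ) (hx : x ∈ D)
    (hx1 : ∀ i : Fin n, x + ((K + 1) * x i) • (Pi.single i 1 : Fin n → ℝ) ∈ D)
    (hx2 : ∀ i : Fin n, x - ((1 / 2) * x i) • (Pi.single i 1 : Fin n → ℝ) ∈ D) :
    ∀ z : Fin n → ℝ,
      quadForm (H x) z ≤ 4 * (n : ℝ) * K ^ 2 * ∑ i, (z i / x i) ^ 2 :=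
  stmt3_general n D g H θ hconv hDpos hHess hposdef hsc1 hsc2 hθ K hK x hx hx1 hx2
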